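/- arXiv:1705.03243 — 4 statements merged into one kernel-verified Lean document; each statement's English description precedes it below -/
import Mathlib

section
/- If u ≠ 0 and 4uv − c²w² = 0 and 4uw − c²v² = 0 but (u,v,w) corresponds to a point where Q has rank ≥ 2, then 2cu² − c²vw ≠ 0. -/
/-!
If `2cu² = c²vw`, then together with the two hypotheses every `2 × 2` minor of `Q` through the
pivot `Q₀₀ = 2u ≠ 0` vanishes, so `Q` is an outer product and has rank at most `1`.
-/

open Matrix

theorem Matrix.rank_le_one_of_pivot_minors_eq_zero {m n K : Type*} [Fintype n] [Field K]
    (M : Matrix m n K) (i₀ : m) (j₀ : n) (hpivot : M i₀ j₀ ≠ 0)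
    (hminor : ∀ i j, M i j * M i₀ j₀ = M i j₀ * M i₀ j) :
    M.rank ≤ 1 := by
  have hM : M = vecMulVec (fun i ↦ M i j₀) (fun j ↦ M i₀ j / M i₀ j₀) := by
    ext i j
    rw [vecMulVec_apply, mul_div_assoc', eq_div_iff hpivot, hminor]
  rw [hM]
  exact rank_vecMulVec_le _ _

theorem case_two_pivot_nonzero_general (c u v w : ℂ) (hu : u ≠ 0)
    (h1 : 4 * u * v - c ^ 2 * w ^ 2 = 0)
    (h2 : 4 * u * w - c ^ 2 * v ^ 2 = 0)
    (hrk : 2 ≤ (!![2 * u, c * w, c * v;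
                   c * w, 2 * v, c * u;
                   c * v, c * u, 2 * w] : Matrix (Fin 3) (Fin 3) ℂ).rank) :
    2 * c * u ^ 2 - c ^ 2 * v * w ≠ 0 := by
  intro h
  have hrank_le := rank_le_one_of_pivot_minors_eq_zero (!![2 * u, c * w, c * v;
      c * w, 2 * v, c * u;
      c * v, c * u, 2 * w] : Matrix (Fin 3) (Fin 3) ℂ) 0 0 (by simpa using hu) fun i j ↦ by
    fin_cases i <;> fin_cases j <;> simp <;>
      first | ring1 | linear_combination h1 | linear_combination h2 | linear_combination h
  omega

/-- If `u ≠ 0`, `4uv − c²w² = 0` and `4uw − c²v² = 0`, but the Sklyanin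
Clifford matrix `Q` at `(u,v,w)` has rank at least `2`, then
`2cu² − c²vw ≠ 0`. -/
theorem case_two_pivot_nonzero (c u v w : ℂ) (hc : c ≠ 0) (hu : u ≠ 0)
    (h1 : 4 * u * v - c ^ 2 * w ^ 2 = 0)
    (h2 : 4 * u * w - c ^ 2 * v ^ 2 = 0)
    (hrk : 2 ≤ (!![2 * u, c * w, c * v;
                   c * w, 2 * v, c * u;
                   c * v, c * u, 2 * w] : Matrix (Fin 3) (Fin 3) ℂ).rank) :
    2 * c * u ^ 2 - c ^ 2 * v * w ≠ 0 :=
  case_two_pivot_nonzero_general c u v w hu h1 h2 hrk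
end

section
/- Let q ≡ 1 (mod 3) be an odd prime power and F = 𝔽_q with q ≡ 1 (mod 4). The number of points (X,Y,Z) ∈ F³ with X+Z ≠ 0 and (X+Z)(Y²+XZ) = 1 equals (q−1)² + 3q. -/
/-!
Put `s = X + Z`, `a = Y - (X - Z)/2`, `b = Y + (X - Z)/2`. Then `Y² + XZ = ab + (s/2)²`,
so the equation becomes `ab = 1/s - (s/2)²` with `s ≠ 0`. For fixed `s` the hyperbola
`ab = c` has `q - 1` points when `c ≠ 0` and `2q - 1` points (the two axes) when `c = 0`,
i.e. when `s³ = 4`. Since `3 ∣ q - 1` and `4 = (t²)³` is a cube, there are exactly three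
such `s`, giving `(q - 1)² + 3q`.
-/

open Finset Polynomial

theorem two_ne_zero_of_card_odd {F : Type*} [Field F] [Fintype F]
    (h : Fintype.card F % 2 = 1) : (2 : F) ≠ 0 :=
  Ring.two_ne_zero fun h2 => by simp [FiniteField.even_card_iff_char_two.mp h2] at h

theorem exists_isPrimitiveRoot_of_prime_dvd {F : Type*} [Field F] [Fintype F] {p : ℕ}
    [Fact p.Prime] (hp : p ∣ Fintype.card F - 1) : ∃ ζ : F, IsPrimitiveRoot ζ p := by
  classical
  obtain ⟨ζ, hζ⟩ := exists_prime_orderOf_dvd_card p (G := Fˣ) (by rwa [Fintype.card_units])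
  exact ⟨ζ, by rw [IsPrimitiveRoot.coe_units_iff, ← hζ]; exact IsPrimitiveRoot.orderOf ζ⟩

theorem IsPrimitiveRoot.card_nthRootsFinset_of_pow_eq {R : Type*} [CommRing R] [IsDomain R]
    {ζ : R} {n : ℕ} (hζ : IsPrimitiveRoot ζ n) {α a : R} (ha : a ≠ 0) (hα : α ^ n = a) :
    #(nthRootsFinset n a) = n := by
  classical
  rw [nthRootsFinset, ← Multiset.toFinset_eq (hζ.nthRoots_nodup ha), card_mk, hζ.card_nthRoots,
    if_pos ⟨α, hα⟩]

section Hyperbola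

variable {F : Type*} [Field F] [Fintype F] [DecidableEq F]

theorem card_hyperbola (c : F) :
    Nat.card {ab : F × F // ab.1 * ab.2 = c} =
      Fintype.card F - 1 + if c = 0 then Fintype.card F else 0 := by
  have hunit (a : F) (ha : a ≠ 0) : Nat.card {b // a * b = c} = 1 :=
    Nat.card_eq_one_iff_exists.mpr ⟨⟨c / a, mul_div_cancel₀ c ha⟩, fun ⟨b, hb⟩ => by
      simp only [Subtype.mk.injEq, ← hb]; field_simp⟩
  have hzero : Nat.card {b : F // 0 * b = c} = if c = 0 then Fintype.card F else 0 := by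
    split_ifs with hc <;> simp [hc, Ne.symm]
  rw [Nat.card_congr (Equiv.subtypeProdEquivSigmaSubtype fun a b => a * b = c), Nat.card_sigma,
    Fintype.sum_eq_add_sum_compl 0, sum_congr rfl fun a ha => hunit a (by simpa using ha),
    sum_const, card_compl, card_singleton, smul_eq_mul, mul_one, hzero, add_comm]

theorem card_hyperbola_family (g : F → F) :
    Nat.card {p : F × F × F // p.1 ≠ 0 ∧ p.2.1 * p.2.2 = g p.1} =
      (Fintype.card F - 1) ^ 2 + Fintype.card F * #{s | s ≠ 0 ∧ g s = 0} := by
  have hfiber (s : F) : Nat.card {ab : F × F // s ≠ 0 ∧ ab.1 * ab.2 = g s} =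
      if s ≠ 0 then Nat.card {ab : F × F // ab.1 * ab.2 = g s} else 0 := by
    split_ifs with hs <;> simp [hs]
  rw [Nat.card_congr (Equiv.subtypeProdEquivSigmaSubtype fun s (ab : F × F) =>
      s ≠ 0 ∧ ab.1 * ab.2 = g s),
    Nat.card_sigma, sum_congr rfl fun s _ => hfiber s, ← sum_filter]
  simp only [card_hyperbola, sum_add_distrib, sum_const, sum_ite, filter_filter, smul_eq_mul,
    mul_zero, add_zero]
  rw [filter_ne', card_erase_of_mem (mem_univ _), card_univ]
  ring

end Hyperbola

section ChangeOfVariables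

variable {F : Type*} [Field F]

def hyperbolicCoords (h2 : (2 : F) ≠ 0) : F × F × F ≃ F × F × F where
  toFun p := (p.1 + p.2.2, p.2.1 - (p.1 - p.2.2) / 2, p.2.1 + (p.1 - p.2.2) / 2)
  invFun q := ((q.1 + (q.2.2 - q.2.1)) / 2, (q.2.1 + q.2.2) / 2, (q.1 - (q.2.2 - q.2.1)) / 2)
  left_inv := by
    rintro ⟨X, Y, Z⟩
    simp only [Prod.mk.injEq]
    refine ⟨?_, ?_, ?_⟩ <;> field_simp <;> ring
  right_inv := by
    rintro ⟨s, a, b⟩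
    simp only [Prod.mk.injEq]
    refine ⟨?_, ?_, ?_⟩ <;> field_simp <;> ring

theorem sq_add_mul_eq (h2 : (2 : F) ≠ 0) (X Y Z : F) :
    Y ^ 2 + X * Z = (Y - (X - Z) / 2) * (Y + (X - Z) / 2) + ((X + Z) / 2) ^ 2 := by
  field_simp
  ring

theorem card_cubic_eq_card_hyperbolas (h2 : (2 : F) ≠ 0) :
    Nat.card {p : F × F × F // p.1 + p.2.2 ≠ 0 ∧
        (p.1 + p.2.2) * (p.2.1 ^ 2 + p.1 * p.2.2) = 1} =
      Nat.card {p : F × F × F // p.1 ≠ 0 ∧ p.2.1 * p.2.2 = p.1⁻¹ - (p.1 / 2) ^ 2} := by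
  refine Nat.card_congr ((hyperbolicCoords h2).subtypeEquiv fun ⟨X, Y, Z⟩ => ?_)
  simp only [hyperbolicCoords, Equiv.coe_fn_mk, sq_add_mul_eq h2 X Y Z]
  refine and_congr_right fun hs => ?_
  rw [mul_eq_one_iff_inv_eq₀ hs, eq_sub_iff_add_eq, eq_comm]

theorem inv_sub_half_sq_eq_zero_iff (h2 : (2 : F) ≠ 0) {s : F} :
    s ≠ 0 ∧ s⁻¹ - (s / 2) ^ 2 = 0 ↔ s ^ 3 = 4 := by
  constructor
  · rintro ⟨hs, h⟩
    field_simp at h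
    linear_combination -h
  · intro h
    have hs : s ≠ 0 := by
      rintro rfl
      exact h2 (pow_eq_zero_iff (n := 2) two_ne_zero |>.mp (by linear_combination -h))
    exact ⟨hs, by field_simp; linear_combination -h⟩

end ChangeOfVariables

/-- Let `F = 𝔽_q` with `q ≡ 1 (mod 4)` and `q ≡ 1 (mod 3)`, and suppose `2` is
a cube in `F` (so that `a³ = 4` has three solutions).  Then the number of points
`(X,Y,Z) ∈ F³` with `X+Z ≠ 0` and `(X+Z)(Y²+XZ) = 1` equals `(q−1)² + 3q`. -/
theorem card_X1 (F : Type*) [Field F] [Fintype F]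
    (hq4 : Fintype.card F % 4 = 1) (hq3 : Fintype.card F % 3 = 1)
    (hcube : ∃ t : F, t ^ 3 = 2) :
    Nat.card
        {p : F × F × F // p.1 + p.2.2 ≠ 0 ∧
          (p.1 + p.2.2) * (p.2.1 ^ 2 + p.1 * p.2.2) = 1} =
      (Fintype.card F - 1) ^ 2 + 3 * Fintype.card F := by
  classical
  have h2 : (2 : F) ≠ 0 := two_ne_zero_of_card_odd (by omega)
  obtain ⟨t, ht⟩ := hcube
  have ht4 : (t ^ 2) ^ 3 = (4 : F) := by rw [← pow_mul, mul_comm, pow_mul, ht]; norm_num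
  have h4 : (4 : F) ≠ 0 := by
    simpa [show (2 : F) ^ 2 = 4 by norm_num] using pow_ne_zero 2 h2
  obtain ⟨ζ, hζ⟩ := exists_isPrimitiveRoot_of_prime_dvd (F := F) (p := 3) (by omega)
  have hroots :
      ({s | s ≠ 0 ∧ s⁻¹ - (s / 2) ^ 2 = 0} : Finset F) = nthRootsFinset 3 (4 : F) := by
    ext s
    rw [mem_filter, mem_nthRootsFinset (by norm_num), inv_sub_half_sq_eq_zero_iff h2]
    simp
  rw [card_cubic_eq_card_hyperbolas h2, card_hyperbola_family fun s => s⁻¹ - (s / 2) ^ 2,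
    hroots, hζ.card_nthRootsFinset_of_pow_eq h4 ht4, mul_comm]
end

section
/- Over a finite field 𝔽_q of odd characteristic with −1 a square and a ∈ 𝔽_q^×: if a³ ≠ 4 then the affine curve {(X,Y) : Y² − X² + aX = 1/a} has exactly q−1 points, and if a³ = 4 it has exactly 2q−1 points. -/
/-!
Since `q` is odd, `2` is invertible, and completing the square,
`(X, Y) ↦ (Y + X - a/2, Y - X + a/2)` maps the conic bijectively onto the hyperbola
`u v = 1/a - a²/4`. A hyperbola `u v = c` with `c ≠ 0` is the graph of `u ↦ c/u` over `𝔽_q^×`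
and has `q - 1` points; for `c = 0` it is the union of the two axes and has `2q - 1` points.
Finally `1/a - a²/4 = 0` exactly when `a³ = 4`.
-/

open Finset

section Hyperbola

variable {F : Type*} [Field F]

def conicEquivHyperbola (h2 : (2 : F) ≠ 0) (a b : F) :
    {p : F × F // p.2 ^ 2 - p.1 ^ 2 + a * p.1 = b} ≃
      {p : F × F // p.1 * p.2 = b - (a / 2) ^ 2} where
  toFun p := ⟨(p.1.2 + p.1.1 - a / 2, p.1.2 - p.1.1 + a / 2), by
    field_simp
    linear_combination 4 * p.2⟩
  invFun p := ⟨((p.1.1 - p.1.2) / 2 + a / 2, (p.1.1 + p.1.2) / 2), by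
    have h := p.2
    field_simp at h ⊢
    linear_combination h⟩
  left_inv p := by ext <;> field_simp <;> ring
  right_inv p := by ext <;> field_simp <;> ring

def unitsEquivMulEq {c : F} (hc : c ≠ 0) : Fˣ ≃ {p : F × F // p.1 * p.2 = c} where
  toFun u := ⟨(u, c / u), mul_div_cancel₀ c u.ne_zero⟩
  invFun p := Units.mk0 p.1.1 (left_ne_zero_of_mul (p.2 ▸ hc))
  left_inv u := by ext; rfl
  right_inv p := by
    have hx : p.1.1 ≠ 0 := left_ne_zero_of_mul (p.2 ▸ hc)
    ext
    · rfl
    · simp only [Units.val_mk0, ← p.2]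
      exact mul_div_cancel_left₀ _ hx

theorem card_mul_eq_of_ne_zero [Finite F] {c : F} (hc : c ≠ 0) :
    Nat.card {p : F × F // p.1 * p.2 = c} = Nat.card F - 1 := by
  rw [← Nat.card_congr (unitsEquivMulEq hc), Nat.card_units]

theorem card_mul_eq_zero [Fintype F] [DecidableEq F] :
    Nat.card {p : F × F // p.1 * p.2 = 0} = 2 * Nat.card F - 1 := by
  have axes : univ.filter (fun p : F × F => p.1 * p.2 = 0) =
      ({0} : Finset F) ×ˢ univ ∪ univ ×ˢ ({0} : Finset F) := by
    ext ⟨x, y⟩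
    simp only [mem_filter, mem_union, mem_product, mem_singleton, mem_univ, true_and, and_true,
      mul_eq_zero]
  have origin : ({0} : Finset F) ×ˢ univ ∩ univ ×ˢ ({0} : Finset F) =
      ({0} : Finset F) ×ˢ ({0} : Finset F) := by
    ext ⟨x, y⟩
    simp only [mem_inter, mem_product, mem_singleton, mem_univ]
    tauto
  have inclusion_exclusion :=
    card_union_add_card_inter (({0} : Finset F) ×ˢ univ) (univ ×ˢ ({0} : Finset F))
  rw [origin] at inclusion_exclusion
  simp only [card_product, card_singleton, card_univ, one_mul, mul_one] at inclusion_exclusion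
  rw [Nat.card_eq_fintype_card, Fintype.card_subtype, axes, Nat.card_eq_fintype_card]
  omega

theorem inv_sub_sq_half_eq_zero_iff {a : F} (ha : a ≠ 0) :
    a⁻¹ - (a / 2) ^ 2 = 0 ↔ a ^ 3 = 4 := by
  rw [sub_eq_zero, inv_eq_iff_eq_inv, eq_comm]
  constructor <;> intro h
  · field_simp at h
    linear_combination -h
  · field_simp
    linear_combination -h

end Hyperbola

/-- Over a finite field `𝔽_q`, `q` odd with `−1` a square (`q ≡ 1 (mod 4)`),
and `a ≠ 0`: the affine conic `{(X,Y) : Y² − X² + aX = 1/a}` has exactly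
`q − 1` points if `a³ ≠ 4` and exactly `2q − 1` points if `a³ = 4`. -/
theorem card_affine_conic (F : Type*) [Field F] [Fintype F] [DecidableEq F]
    (hq : Fintype.card F % 4 = 1) (a : F) (ha : a ≠ 0) :
    Nat.card {p : F × F // p.2 ^ 2 - p.1 ^ 2 + a * p.1 = a⁻¹} =
      if a ^ 3 = 4 then 2 * Fintype.card F - 1 else Fintype.card F - 1 := by
  have h2 : (2 : F) ≠ 0 := Ring.two_ne_zero fun h => by
    have := FiniteField.even_card_of_char_two h
    omega
  rw [Nat.card_congr (conicEquivHyperbola h2 a a⁻¹), ← Nat.card_eq_fintype_card]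
  split_ifs with h
  · rw [(inv_sub_sq_half_eq_zero_iff ha).2 h, card_mul_eq_zero]
  · exact card_mul_eq_of_ne_zero (mt (inv_sub_sq_half_eq_zero_iff ha).1 h)
end

section
/- Let F be a finite field with |F| = q and char F not dividing 6c, c ∈ F, c ≠ 0. The number of solutions in F⁸ (variables n,r,s,v,z,p,t,x) of (c/3)(n³+r³+s³+v³+z³) + 2rvz + (v+s)p + (n+r)t + czx = 0, minus the number of solutions of the same equation set equal to 1, equals q⁵. -/
open scoped Classical

private def sP {F : Type*} [Field F] (c : F) (y : Fin 8 → F) : F :=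
  (c / 3) * (y 0 ^ 3 + y 1 ^ 3 + y 2 ^ 3 + y 3 ^ 3 + y 4 ^ 3) +
    2 * y 1 * y 3 * y 4 + (y 3 + y 2) * y 5 + (y 0 + y 1) * y 6 + c * y 4 * y 7

private def sD {F : Type*} [Field F] (y : Fin 8 → F) : Prop :=
  y 3 + y 2 ≠ 0 ∨ y 0 + y 1 ≠ 0 ∨ y 4 ≠ 0

private noncomputable def sShift {F : Type*} [Field F] (c δ : F) (y : Fin 8 → F) :
    Fin 8 → F :=
  if y 3 + y 2 ≠ 0 then Function.update y 5 (y 5 + δ / (y 3 + y 2))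
  else if y 0 + y 1 ≠ 0 then Function.update y 6 (y 6 + δ / (y 0 + y 1))
  else Function.update y 7 (y 7 + δ / (c * y 4))

private lemma sShift_apply_ne {F : Type*} [Field F] (c δ : F) (y : Fin 8 → F)
    {i : Fin 8} (h5 : i ≠ 5) (h6 : i ≠ 6) (h7 : i ≠ 7) :
    sShift c δ y i = y i := by
  unfold sShift
  split_ifs <;> simp [Function.update_apply, h5, h6, h7]

private lemma sD_shift {F : Type*} [Field F] (c δ : F) (y : Fin 8 → F) :
    sD (sShift c δ y) ↔ sD y := by
  unfold sD
  rw [sShift_apply_ne c δ y (by decide) (by decide) (by decide),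
    sShift_apply_ne c δ y (by decide) (by decide) (by decide),
    sShift_apply_ne c δ y (by decide) (by decide) (by decide),
    sShift_apply_ne c δ y (by decide) (by decide) (by decide),
    sShift_apply_ne c δ y (by decide) (by decide) (by decide)]

private lemma sShift_def_pos {F : Type*} [Field F] {c δ : F} {y : Fin 8 → F}
    (h : y 3 + y 2 ≠ 0) :
    sShift c δ y = Function.update y 5 (y 5 + δ / (y 3 + y 2)) := by
  unfold sShift; rw [if_pos h]

private lemma sShift_def_mid {F : Type*} [Field F] {c δ : F} {y : Fin 8 → F}
    (h : ¬ y 3 + y 2 ≠ 0) (h' : y 0 + y 1 ≠ 0) :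
    sShift c δ y = Function.update y 6 (y 6 + δ / (y 0 + y 1)) := by
  unfold sShift; rw [if_neg h, if_pos h']

private lemma sShift_def_neg {F : Type*} [Field F] {c δ : F} {y : Fin 8 → F}
    (h : ¬ y 3 + y 2 ≠ 0) (h' : ¬ y 0 + y 1 ≠ 0) :
    sShift c δ y = Function.update y 7 (y 7 + δ / (c * y 4)) := by
  unfold sShift; rw [if_neg h, if_neg h']

private lemma sP_shift {F : Type*} [Field F] {c : F} (hc : c ≠ 0) (δ : F)
    {y : Fin 8 → F} (hD : sD y) :
    sP c (sShift c δ y) = sP c y + δ := by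
  by_cases h1 : y 3 + y 2 ≠ 0
  · rw [sShift_def_pos h1]
    have hd : (y 3 + y 2) * (δ / (y 3 + y 2)) = δ := by field_simp
    simp only [sP,
      Function.update_self,
      Function.update_of_ne (show (0 : Fin 8) ≠ 5 by decide),
      Function.update_of_ne (show (1 : Fin 8) ≠ 5 by decide),
      Function.update_of_ne (show (2 : Fin 8) ≠ 5 by decide),
      Function.update_of_ne (show (3 : Fin 8) ≠ 5 by decide),
      Function.update_of_ne (show (4 : Fin 8) ≠ 5 by decide),
      Function.update_of_ne (show (6 : Fin 8) ≠ 5 by decide),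
      Function.update_of_ne (show (7 : Fin 8) ≠ 5 by decide)]
    linear_combination hd
  · by_cases h2 : y 0 + y 1 ≠ 0
    · rw [sShift_def_mid h1 h2]
      have hd : (y 0 + y 1) * (δ / (y 0 + y 1)) = δ := by field_simp
      simp only [sP,
        Function.update_self,
        Function.update_of_ne (show (0 : Fin 8) ≠ 6 by decide),
        Function.update_of_ne (show (1 : Fin 8) ≠ 6 by decide),
        Function.update_of_ne (show (2 : Fin 8) ≠ 6 by decide),
        Function.update_of_ne (show (3 : Fin 8) ≠ 6 by decide),
        Function.update_of_ne (show (4 : Fin 8) ≠ 6 by decide),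
        Function.update_of_ne (show (5 : Fin 8) ≠ 6 by decide),
        Function.update_of_ne (show (7 : Fin 8) ≠ 6 by decide)]
      linear_combination hd
    · have h4 : y 4 ≠ 0 := by
        rcases hD with h | h | h
        · exact absurd h h1
        · exact absurd h h2
        · exact h
      rw [sShift_def_neg h1 h2]
      have hd : (c * y 4) * (δ / (c * y 4)) = δ := by field_simp
      simp only [sP,
        Function.update_self,
        Function.update_of_ne (show (0 : Fin 8) ≠ 7 by decide),
        Function.update_of_ne (show (1 : Fin 8) ≠ 7 by decide),
        Function.update_of_ne (show (2 : Fin 8) ≠ 7 by decide),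
        Function.update_of_ne (show (3 : Fin 8) ≠ 7 by decide),
        Function.update_of_ne (show (4 : Fin 8) ≠ 7 by decide),
        Function.update_of_ne (show (5 : Fin 8) ≠ 7 by decide),
        Function.update_of_ne (show (6 : Fin 8) ≠ 7 by decide)]
      linear_combination hd

private lemma sShift_inv {F : Type*} [Field F] (c δ : F) (y : Fin 8 → F) :
    sShift c (-δ) (sShift c δ y) = y := by
  by_cases h1 : y 3 + y 2 ≠ 0
  · rw [sShift_def_pos h1]
    have h1' : Function.update y 5 (y 5 + δ / (y 3 + y 2)) 3 +
        Function.update y 5 (y 5 + δ / (y 3 + y 2)) 2 ≠ 0 := by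
      rw [Function.update_of_ne (show (3 : Fin 8) ≠ 5 by decide),
        Function.update_of_ne (show (2 : Fin 8) ≠ 5 by decide)]
      exact h1
    rw [sShift_def_pos h1']
    have e : Function.update y 5 (y 5 + δ / (y 3 + y 2)) 5 +
        (-δ) / (Function.update y 5 (y 5 + δ / (y 3 + y 2)) 3 +
          Function.update y 5 (y 5 + δ / (y 3 + y 2)) 2) = y 5 := by
      rw [Function.update_self,
        Function.update_of_ne (show (3 : Fin 8) ≠ 5 by decide),
        Function.update_of_ne (show (2 : Fin 8) ≠ 5 by decide)]
      ring
    rw [e, Function.update_idem, Function.update_eq_self]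
  · by_cases h2 : y 0 + y 1 ≠ 0
    · rw [sShift_def_mid h1 h2]
      have h1' : ¬ (Function.update y 6 (y 6 + δ / (y 0 + y 1)) 3 +
          Function.update y 6 (y 6 + δ / (y 0 + y 1)) 2 ≠ 0) := by
        rw [Function.update_of_ne (show (3 : Fin 8) ≠ 6 by decide),
          Function.update_of_ne (show (2 : Fin 8) ≠ 6 by decide)]
        exact h1
      have h2' : Function.update y 6 (y 6 + δ / (y 0 + y 1)) 0 +
          Function.update y 6 (y 6 + δ / (y 0 + y 1)) 1 ≠ 0 := by
        rw [Function.update_of_ne (show (0 : Fin 8) ≠ 6 by decide),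
          Function.update_of_ne (show (1 : Fin 8) ≠ 6 by decide)]
        exact h2
      rw [sShift_def_mid h1' h2']
      have e : Function.update y 6 (y 6 + δ / (y 0 + y 1)) 6 +
          (-δ) / (Function.update y 6 (y 6 + δ / (y 0 + y 1)) 0 +
            Function.update y 6 (y 6 + δ / (y 0 + y 1)) 1) = y 6 := by
        rw [Function.update_self,
          Function.update_of_ne (show (0 : Fin 8) ≠ 6 by decide),
          Function.update_of_ne (show (1 : Fin 8) ≠ 6 by decide)]
        ring
      rw [e, Function.update_idem, Function.update_eq_self]
    · rw [sShift_def_neg h1 h2]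
      have h1' : ¬ (Function.update y 7 (y 7 + δ / (c * y 4)) 3 +
          Function.update y 7 (y 7 + δ / (c * y 4)) 2 ≠ 0) := by
        rw [Function.update_of_ne (show (3 : Fin 8) ≠ 7 by decide),
          Function.update_of_ne (show (2 : Fin 8) ≠ 7 by decide)]
        exact h1
      have h2' : ¬ (Function.update y 7 (y 7 + δ / (c * y 4)) 0 +
          Function.update y 7 (y 7 + δ / (c * y 4)) 1 ≠ 0) := by
        rw [Function.update_of_ne (show (0 : Fin 8) ≠ 7 by decide),
          Function.update_of_ne (show (1 : Fin 8) ≠ 7 by decide)]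
        exact h2
      rw [sShift_def_neg h1' h2']
      have e : Function.update y 7 (y 7 + δ / (c * y 4)) 7 +
          (-δ) / (c * Function.update y 7 (y 7 + δ / (c * y 4)) 4) = y 7 := by
        rw [Function.update_self,
          Function.update_of_ne (show (4 : Fin 8) ≠ 7 by decide)]
        ring
      rw [e, Function.update_idem, Function.update_eq_self]

private def degEquiv (F : Type*) [Field F] :
    {y : Fin 8 → F // y 3 + y 2 = 0 ∧ y 0 + y 1 = 0 ∧ y 4 = 0} ≃ (Fin 5 → F) where
  toFun x := ![x.1 0, x.1 2, x.1 5, x.1 6, x.1 7]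
  invFun a := ⟨![a 0, -(a 0), a 1, -(a 1), 0, a 2, a 3, a 4],
    by show -(a 1) + a 1 = 0; ring,
    by show a 0 + -(a 0) = 0; ring,
    rfl⟩
  left_inv := by
    rintro ⟨y, h1, h2, h3⟩
    apply Subtype.ext
    funext i
    fin_cases i
    · rfl
    · show -(y 0) = y 1; linear_combination -h2
    · rfl
    · show -(y 2) = y 3; linear_combination -h1
    · exact h3.symm
    · rfl
    · rfl
    · rfl
  right_inv := by
    intro a
    funext i
    fin_cases i <;> rfl

/-- Point-count shadow of `[S₃(0)] − [S₃(1)] = 𝕃⁵`: over a finite field `F`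
with `char F ∤ 6` and `c ≠ 0`, the number of solutions in `F⁸` (variables
`n,r,s,v,z,p,t,x`) of
`(c/3)(n³+r³+s³+v³+z³) + 2rvz + (v+s)p + (n+r)t + czx = 0`
exceeds the number of solutions of the same equation set equal to `1` by
exactly `q⁵`. -/
theorem cell_S3_count (F : Type*) [Field F] [Fintype F]
    (hchar : ¬ (ringChar F ∣ 6)) (c : F) (hc : c ≠ 0) :
    Nat.card {y : Fin 8 → F //
        (c / 3) * (y 0 ^ 3 + y 1 ^ 3 + y 2 ^ 3 + y 3 ^ 3 + y 4 ^ 3) +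
          2 * y 1 * y 3 * y 4 + (y 3 + y 2) * y 5 + (y 0 + y 1) * y 6 +
          c * y 4 * y 7 = 0} =
      Nat.card {y : Fin 8 → F //
        (c / 3) * (y 0 ^ 3 + y 1 ^ 3 + y 2 ^ 3 + y 3 ^ 3 + y 4 ^ 3) +
          2 * y 1 * y 3 * y 4 + (y 3 + y 2) * y 5 + (y 0 + y 1) * y 6 +
          c * y 4 * y 7 = 1} + Fintype.card F ^ 5 := by
  have hzero : ∀ y : Fin 8 → F, ¬ sD y → sP c y = 0 := by
    intro y hy
    unfold sD at hy
    push_neg at hy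
    obtain ⟨e1, e2, e3⟩ := hy
    have e1' : y 3 = -y 2 := by linear_combination e1
    have e2' : y 0 = -y 1 := by linear_combination e2
    unfold sP
    rw [e1', e2', e3]
    ring
  have split : ∀ a : F, Nat.card {y : Fin 8 → F // sP c y = a} =
      Nat.card {y : Fin 8 → F // sP c y = a ∧ sD y} +
        Nat.card {y : Fin 8 → F // sP c y = a ∧ ¬ sD y} := by
    intro a
    rw [← Nat.card_sum]
    apply Nat.card_congr
    exact {
      toFun := fun x => if h : sD x.1 then Sum.inl ⟨x.1, x.2, h⟩ else Sum.inr ⟨x.1, x.2, h⟩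
      invFun := Sum.elim (fun x => ⟨x.1, x.2.1⟩) (fun x => ⟨x.1, x.2.1⟩)
      left_inv := by intro x; by_cases h : sD x.1 <;> simp [h]
      right_inv := by rintro (x | x) <;> simp [x.2.2] }
  have key : Nat.card {y : Fin 8 → F // sP c y = 0 ∧ sD y} =
      Nat.card {y : Fin 8 → F // sP c y = 1 ∧ sD y} := by
    apply Nat.card_congr
    exact {
      toFun := fun x => ⟨sShift c 1 x.1,
        by rw [sP_shift hc _ x.2.2, x.2.1]; ring,
        (sD_shift c _ x.1).mpr x.2.2⟩
      invFun := fun x => ⟨sShift c (-1) x.1,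
        by rw [sP_shift hc _ x.2.2, x.2.1]; ring,
        (sD_shift c _ x.1).mpr x.2.2⟩
      left_inv := by
        intro x
        apply Subtype.ext
        exact sShift_inv c 1 x.1
      right_inv := by
        intro x
        apply Subtype.ext
        have := sShift_inv c (-1) x.1
        rw [neg_neg] at this
        exact this }
  have h1empty : Nat.card {y : Fin 8 → F // sP c y = 1 ∧ ¬ sD y} = 0 := by
    have : IsEmpty {y : Fin 8 → F // sP c y = 1 ∧ ¬ sD y} := by
      constructor
      rintro ⟨y, h, hD⟩
      rw [hzero y hD] at h
      exact zero_ne_one h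
    exact Nat.card_of_isEmpty
  have h0deg : Nat.card {y : Fin 8 → F // sP c y = 0 ∧ ¬ sD y} = Fintype.card F ^ 5 := by
    have e1 : {y : Fin 8 → F // sP c y = 0 ∧ ¬ sD y} ≃
        {y : Fin 8 → F // y 3 + y 2 = 0 ∧ y 0 + y 1 = 0 ∧ y 4 = 0} := by
      apply Equiv.subtypeEquivRight
      intro y
      constructor
      · rintro ⟨-, hD⟩
        unfold sD at hD; push_neg at hD; exact hD
      · intro h
        have hD : ¬ sD y := by unfold sD; push_neg; exact h
        exact ⟨hzero y hD, hD⟩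
    rw [Nat.card_congr (e1.trans (degEquiv F))]
    simp [Nat.card_eq_fintype_card]
  calc Nat.card {y : Fin 8 → F // sP c y = 0}
      = Nat.card {y : Fin 8 → F // sP c y = 0 ∧ sD y} +
          Nat.card {y : Fin 8 → F // sP c y = 0 ∧ ¬ sD y} := split 0
    _ = Nat.card {y : Fin 8 → F // sP c y = 1 ∧ sD y} + Fintype.card F ^ 5 := by
          rw [key, h0deg]
    _ = (Nat.card {y : Fin 8 → F // sP c y = 1 ∧ sD y} +
          Nat.card {y : Fin 8 → F // sP c y = 1 ∧ ¬ sD y}) + Fintype.card F ^ 5 := by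
          rw [h1empty, Nat.add_zero]
    _ = Nat.card {y : Fin 8 → F // sP c y = 1} + Fintype.card F ^ 5 := by
          rw [split 1]
end
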